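/- For every μ > 0 there exists a probability measure π on ℝ × ℝ (the sticky coupling) whose first marginal is the Gaussian measure N(−μ,1), whose second marginal is N(μ,1), such that π({(x,y) : x ≤ y}) = 1 (monotonicity) and π({(x,y) : x = y}) = 1 − erf(μ/√2) (optimality: the probability of disagreement equals the total variation distance between N(−μ,1) and N(μ,1)). -/

import Mathlib

/-!
Split the two Gaussian densities `f` (mean `-μ`) and `g` (mean `μ`) into their common part
`min f g` and the residuals `(f - g)⁺`, `(g - f)⁺`, which have equal mass `ε`, the total variation
distance. The coupling keeps the common part on the diagonal and couples the residual parts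
independently (with weight `ε⁻¹`). Since the densities cross exactly once, at `0`, the first
residual lives on `(-∞, 0]` and the second on `(0, ∞)`, so the independent part lies strictly
above the diagonal. The mass `ε = N(-μ,1)(-∞, 0] - N(μ,1)(-∞, 0] = N(0,1)(-μ, μ]` is
`erf(μ/√2)` after the substitution `x = √2 u`.
-/

open MeasureTheory ProbabilityTheory Set
open scoped ENNReal NNReal

/-- `erf(x)`: the probability that a centered Gaussian of variance `1/2` lies in `[−x,x]`,
i.e. `(2/√π)∫₀ˣ e^{−u²} du`. -/
noncomputable def erf (x : ℝ) : ℝ := 2 / Real.sqrt Real.pi * ∫ u in (0 : ℝ)..x, Real.exp (-u ^ 2)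

section Decomposition

variable {α : Type*} [MeasurableSpace α] {μ : Measure α} {f g : α → ℝ≥0∞}

lemma withDensity_eq_withDensity_inf_add_withDensity_tsub (hf : Measurable f) (hg : Measurable g) :
    μ.withDensity f = μ.withDensity (f ⊓ g) + μ.withDensity (f - g) := by
  rw [← withDensity_add_left (hf.inf hg)]
  congr 1
  ext x
  exact ((add_comm (min (f x) (g x)) _).trans tsub_add_min).symm

lemma withDensity_tsub_apply_eq_zero {s : Set α} (hs : MeasurableSet s)
    (h : ∀ x ∈ s, f x ≤ g x) : μ.withDensity (f - g) s = 0 := by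
  rw [withDensity_apply _ hs]
  exact setLIntegral_eq_zero hs fun x hx ↦ tsub_eq_zero_of_le (h x hx)

lemma measure_univ_eq_add_apply_sub_add_apply {m ν₁ ν₂ : Measure α} [IsFiniteMeasure m]
    {s : Set α} (hs : MeasurableSet s) (h₁ : ν₁ sᶜ = 0) (h₂ : ν₂ s = 0) :
    ν₁ univ = (m + ν₁) s - (m + ν₂) s := by
  rw [← measure_add_measure_compl hs, h₁, add_zero, Measure.add_apply, Measure.add_apply, h₂,
    add_zero, ENNReal.add_sub_cancel_left (measure_ne_top m s)]

end Decomposition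

namespace MeasureTheory.Measure

variable {α : Type*} [MeasurableSpace α]

/-- If `ν₁ = 0`, the factor `(ν₁ univ)⁻¹ = ∞` multiplies the zero measure. -/
noncomputable def stickyCoupling (m ν₁ ν₂ : Measure α) : Measure (α × α) :=
  m.map (fun x ↦ (x, x)) + (ν₁ univ)⁻¹ • ν₁.prod ν₂

variable {m ν₁ ν₂ : Measure α}

lemma stickyCoupling_map_fst [IsFiniteMeasure ν₂] (h : ν₁ univ = ν₂ univ) :
    (m.stickyCoupling ν₁ ν₂).map Prod.fst = m + ν₁ := by
  rw [stickyCoupling, Measure.map_add _ _ measurable_fst, Measure.map_smul,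
    Measure.map_map measurable_fst (by fun_prop), Function.comp_def, Measure.map_id',
    map_fst_prod, ← h]
  by_cases h0 : ν₁ univ = 0
  · simp [measure_univ_eq_zero.mp h0]
  · rw [smul_smul, ENNReal.inv_mul_cancel h0 (h ▸ measure_ne_top _ _), one_smul]

lemma stickyCoupling_map_snd [IsFiniteMeasure ν₁] [SFinite ν₂] (h : ν₁ univ = ν₂ univ) :
    (m.stickyCoupling ν₁ ν₂).map Prod.snd = m + ν₂ := by
  rw [stickyCoupling, Measure.map_add _ _ measurable_snd, Measure.map_smul,
    Measure.map_map measurable_snd (by fun_prop), Function.comp_def, Measure.map_id',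
    map_snd_prod]
  by_cases h0 : ν₁ univ = 0
  · simp [measure_univ_eq_zero.mp (h ▸ h0)]
  · rw [smul_smul, ENNReal.inv_mul_cancel h0 (measure_ne_top _ _), one_smul]

lemma stickyCoupling_apply {s : Set (α × α)} (hs : MeasurableSet s) :
    m.stickyCoupling ν₁ ν₂ s = m ((fun x ↦ (x, x)) ⁻¹' s) + (ν₁ univ)⁻¹ * ν₁.prod ν₂ s := by
  rw [stickyCoupling, add_apply, smul_apply, map_apply (by fun_prop) hs, smul_eq_mul]

lemma prod_setOf_snd_le_fst_eq_zero [LinearOrder α] [SFinite ν₂] {c : α}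
    (h₁ : ν₁ (Ioi c) = 0) (h₂ : ν₂ (Iic c) = 0) :
    ν₁.prod ν₂ {p | p.2 ≤ p.1} = 0 := by
  have hsub : {p : α × α | p.2 ≤ p.1} ⊆ Ioi c ×ˢ univ ∪ univ ×ˢ Iic c := fun p hp ↦ by
    by_cases hc : c < p.1
    · exact .inl ⟨hc, trivial⟩
    · exact .inr ⟨trivial, hp.trans (not_lt.mp hc)⟩
  refine measure_mono_null hsub (measure_union_null ?_ ?_) <;> simp [prod_prod, h₁, h₂]

section Order

variable [LinearOrder α] [TopologicalSpace α] [OrderClosedTopology α] [SecondCountableTopology α]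
  [OpensMeasurableSpace α] [SFinite ν₂] {c : α}

lemma ae_stickyCoupling_fst_le_snd (h₁ : ν₁ (Ioi c) = 0) (h₂ : ν₂ (Iic c) = 0) :
    ∀ᵐ p ∂m.stickyCoupling ν₁ ν₂, p.1 ≤ p.2 := by
  have hprod : ν₁.prod ν₂ {p | p.2 < p.1} = 0 :=
    measure_mono_null (fun _ hp ↦ le_of_lt hp) (prod_setOf_snd_le_fst_eq_zero h₁ h₂)
  simp only [ae_iff, not_le, stickyCoupling_apply (measurableSet_lt measurable_snd measurable_fst),
    hprod]
  simp

lemma stickyCoupling_setOf_fst_eq_snd (h₁ : ν₁ (Ioi c) = 0) (h₂ : ν₂ (Iic c) = 0) :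
    m.stickyCoupling ν₁ ν₂ {p | p.1 = p.2} = m univ := by
  have hprod : ν₁.prod ν₂ {p | p.1 = p.2} = 0 :=
    measure_mono_null (fun _ hp ↦ ge_of_eq hp) (prod_setOf_snd_le_fst_eq_zero h₁ h₂)
  rw [stickyCoupling_apply (measurableSet_eq_fun measurable_fst measurable_snd), hprod]
  simp

end Order

end MeasureTheory.Measure

section MonotoneCoupling

variable {α : Type*} [MeasurableSpace α] [LinearOrder α] [TopologicalSpace α]
  [OrderClosedTopology α] [SecondCountableTopology α] [OpensMeasurableSpace α]
  {P Q : Measure α} [IsProbabilityMeasure P] [IsProbabilityMeasure Q] {c : α}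

theorem exists_monotone_coupling_of_eq_add {m ν₁ ν₂ : Measure α} (hP : P = m + ν₁)
    (hQ : Q = m + ν₂) (h₁ : ν₁ (Ioi c) = 0) (h₂ : ν₂ (Iic c) = 0) :
    ∃ π : Measure (α × α), IsProbabilityMeasure π ∧ π.map Prod.fst = P ∧ π.map Prod.snd = Q ∧
      π {p | p.1 ≤ p.2} = 1 ∧ π {p | p.1 = p.2} = 1 - (P (Iic c) - Q (Iic c)) := by
  have : IsFiniteMeasure m := isFiniteMeasure_of_le P (hP ▸ Measure.le_add_right le_rfl)
  have : IsFiniteMeasure ν₁ := isFiniteMeasure_of_le P (hP ▸ Measure.le_add_left le_rfl)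
  have : IsFiniteMeasure ν₂ := isFiniteMeasure_of_le Q (hQ ▸ Measure.le_add_left le_rfl)
  have hm : m univ + ν₁ univ = 1 := by rw [← Measure.add_apply, ← hP, measure_univ]
  have hmass : ν₁ univ = ν₂ univ := (ENNReal.add_right_inj (measure_ne_top m univ)).mp <| by
    rw [hm, ← Measure.add_apply, ← hQ, measure_univ]
  have hfst : (m.stickyCoupling ν₁ ν₂).map Prod.fst = P := by
    rw [Measure.stickyCoupling_map_fst hmass, hP]
  have : IsProbabilityMeasure ((m.stickyCoupling ν₁ ν₂).map Prod.fst) := hfst ▸ inferInstance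
  have : IsProbabilityMeasure (m.stickyCoupling ν₁ ν₂) :=
    Measure.isProbabilityMeasure_of_map Prod.fst
  refine ⟨m.stickyCoupling ν₁ ν₂, this, hfst, by rw [Measure.stickyCoupling_map_snd hmass, hQ],
    ((ae_iff_measure_eq (measurableSet_le measurable_fst measurable_snd).nullMeasurableSet).mp
      (Measure.ae_stickyCoupling_fst_le_snd h₁ h₂)).trans measure_univ, ?_⟩
  rw [Measure.stickyCoupling_setOf_fst_eq_snd h₁ h₂, hP, hQ,
    ← measure_univ_eq_add_apply_sub_add_apply measurableSet_Iic (compl_Iic (a := c) ▸ h₁) h₂]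
  exact ENNReal.eq_sub_of_add_eq (measure_ne_top _ _) hm

theorem exists_monotone_coupling_of_withDensity {μ : Measure α} {f g : α → ℝ≥0∞}
    (hf : Measurable f) (hg : Measurable g) (hP : P = μ.withDensity f) (hQ : Q = μ.withDensity g)
    (hgf : ∀ x ≤ c, g x ≤ f x) (hfg : ∀ x, c < x → f x ≤ g x) :
    ∃ π : Measure (α × α), IsProbabilityMeasure π ∧ π.map Prod.fst = P ∧ π.map Prod.snd = Q ∧
      π {p | p.1 ≤ p.2} = 1 ∧ π {p | p.1 = p.2} = 1 - (P (Iic c) - Q (Iic c)) :=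
  exists_monotone_coupling_of_eq_add
    (hP.trans (withDensity_eq_withDensity_inf_add_withDensity_tsub hf hg))
    (hQ.trans (inf_comm f g ▸ withDensity_eq_withDensity_inf_add_withDensity_tsub hg hf))
    (withDensity_tsub_apply_eq_zero measurableSet_Ioi hfg)
    (withDensity_tsub_apply_eq_zero measurableSet_Iic hgf)

end MonotoneCoupling

lemma intervalIntegral.integral_neg_self_of_even {f : ℝ → ℝ} (hf : ∀ x, f (-x) = f x)
    (hint : ∀ a b : ℝ, IntervalIntegrable f volume a b) (b : ℝ) :
    ∫ x in -b..b, f x = 2 * ∫ x in 0..b, f x := by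
  rw [← intervalIntegral.integral_add_adjacent_intervals (hint _ 0) (hint 0 _), two_mul]
  congr 1
  simpa [hf] using (intervalIntegral.integral_comp_neg (a := 0) (b := b) f).symm

lemma erf_nonneg {x : ℝ} (hx : 0 ≤ x) : 0 ≤ erf x :=
  mul_nonneg (by positivity) (intervalIntegral.integral_nonneg hx fun _ _ ↦ (Real.exp_pos _).le)

lemma intervalIntegral_gaussianPDFReal_neg_self_eq_erf (a : ℝ) :
    ∫ x in -a..a, gaussianPDFReal 0 1 x = erf (a / √2) := by
  have hpdf (x : ℝ) :
      gaussianPDFReal 0 1 x = (√(2 * Real.pi))⁻¹ * Real.exp (-(x / √2) ^ 2) := by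
    rw [div_pow, Real.sq_sqrt zero_le_two]
    simp [gaussianPDFReal, neg_div]
  have hsubst := intervalIntegral.integral_comp_div (a := -a) (b := a)
    (fun u ↦ Real.exp (-u ^ 2)) (by positivity : √2 ≠ 0)
  simp_rw [hpdf, intervalIntegral.integral_const_mul, hsubst, neg_div,
    intervalIntegral.integral_neg_self_of_even (fun x ↦ by simp)
      (fun _ _ ↦ (by fun_prop : Continuous fun u : ℝ ↦ Real.exp (-u ^ 2)).intervalIntegrable _ _),
    erf, Real.sqrt_mul zero_le_two, smul_eq_mul]
  field_simp

lemma gaussianPDF_le_of_sq_le {a b x : ℝ} (v : ℝ≥0) (h : (x - a) ^ 2 ≤ (x - b) ^ 2) :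
    gaussianPDF b v x ≤ gaussianPDF a v x :=
  ENNReal.ofReal_le_ofReal (by unfold gaussianPDFReal; gcongr)

lemma gaussianReal_apply_Iic_zero (b : ℝ) (v : ℝ≥0) :
    gaussianReal b v (Iic 0) = gaussianReal 0 v (Iic (-b)) := by
  rw [← zero_add b, ← gaussianReal_map_add_const, Measure.map_apply (by fun_prop) measurableSet_Iic]
  congr 1
  ext x
  simp [← sub_nonpos]

lemma gaussianReal_neg_Iic_zero_sub_gaussianReal_Iic_zero {a : ℝ} (ha : 0 ≤ a) :
    gaussianReal (-a) 1 (Iic 0) - gaussianReal a 1 (Iic 0) = ENNReal.ofReal (erf (a / √2)) := by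
  rw [gaussianReal_apply_Iic_zero, gaussianReal_apply_Iic_zero, neg_neg,
    ← measure_sdiff (Iic_subset_Iic.mpr (by linarith)) measurableSet_Iic.nullMeasurableSet
      (measure_ne_top _ _), Iic_sdiff_Iic, gaussianReal_apply_eq_integral _ one_ne_zero,
    ← intervalIntegral.integral_of_le (by linarith),
    intervalIntegral_gaussianPDFReal_neg_self_eq_erf]

/-- Existence of the sticky coupling of `N(−μ,1)` and `N(μ,1)`: a monotone coupling for which
the probability of disagreement equals the total-variation distance `erf(μ/√2)` between the
two Gaussians. -/
theorem sticky_coupling_exists (μ : ℝ) (hμ : 0 < μ) :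
    ∃ π : Measure (ℝ × ℝ), IsProbabilityMeasure π ∧
      π.map Prod.fst = gaussianReal (-μ) 1 ∧
      π.map Prod.snd = gaussianReal μ 1 ∧
      π {p : ℝ × ℝ | p.1 ≤ p.2} = 1 ∧
      π {p : ℝ × ℝ | p.1 = p.2} = ENNReal.ofReal (1 - erf (μ / Real.sqrt 2)) := by
  obtain ⟨π, hπ, hfst, hsnd, hle, hdiag⟩ := exists_monotone_coupling_of_withDensity (c := 0)
    (measurable_gaussianPDF _ _) (measurable_gaussianPDF _ _)
    (gaussianReal_of_var_ne_zero (-μ) one_ne_zero) (gaussianReal_of_var_ne_zero μ one_ne_zero)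
    (fun x hx ↦ gaussianPDF_le_of_sq_le 1 (by nlinarith))
    (fun x hx ↦ gaussianPDF_le_of_sq_le 1 (by nlinarith))
  refine ⟨π, hπ, hfst, hsnd, hle, ?_⟩
  rw [hdiag, gaussianReal_neg_Iic_zero_sub_gaussianReal_Iic_zero hμ.le,
    ENNReal.ofReal_sub _ (erf_nonneg (by positivity)), ENNReal.ofReal_one]
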